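/- arXiv:math/0205206 — 2 statements merged into one kernel-verified Lean document; each statement's English description precedes it below -/
import Mathlib

section
/- For every permutation π of {1,...,n} avoiding the pattern 132, the number of right-to-left maxima of π equals the alternating sum ∑_{d=1}^{n} (-1)^{d+1} · (number of increasing subsequences of π of length d). -/
/-- A function `π : Fin n → Fin n` contains the pattern `p : Fin k → ℕ` if there is a
strictly increasing choice of indices whose images under `π` have the same pairwise
order relations as the entries of `p`. -/
def Contains {n k : ℕ} (π : Fin n → Fin n) (p : Fin k → ℕ) : Prop :=
  ∃ f : Fin k → Fin n, StrictMono f ∧ ∀ i j, p i < p j ↔ π (f i) < π (f j)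

/-- `π` avoids the pattern `p`. -/
def Avoids {n k : ℕ} (π : Fin n → Fin n) (p : Fin k → ℕ) : Prop := ¬ Contains π p

/-- The set of permutations of `Fin n` avoiding the patterns 132, 2341 and 3241,
i.e. the 132-avoiding two-stack sortable permutations. -/
def TSS132 (n : ℕ) : Set (Fin n → Fin n) :=
  {π | Function.Bijective π ∧ Avoids π ![1,3,2] ∧ Avoids π ![2,3,4,1] ∧ Avoids π ![3,2,4,1]}

/-- The Pell numbers. -/
def pell : ℕ → ℕ
  | 0 => 0
  | 1 => 1
  | n+2 => 2 * pell (n+1) + pell n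

/-! Group the nonempty increasing subsequences of `π` by their first entry `i`. Avoiding 132
forces the entries northeast of `i` (later and larger) to be increasing themselves, so the
increasing subsequences starting at `i` are `i` followed by an arbitrary subset `D` of them.
Their signed count `∑_D (-1)^|D|` is `1` if nothing lies northeast of `i`, i.e. if `π i` is a
right-to-left maximum, and `0` otherwise. -/

open Finset

section

variable {α β : Type*} [LinearOrder α] [Fintype α] [LinearOrder β] (π : α → β)

def northEast (i : α) : Finset α := {j | i < j ∧ π i < π j}

variable {π}

@[simp]
lemma mem_northEast {i j : α} : j ∈ northEast π i ↔ i < j ∧ π i < π j := by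
  simp [northEast]

lemma northEast_eq_empty_iff (hπ : Function.Injective π) (i : α) :
    northEast π i = ∅ ↔ ∀ j, i < j → π j < π i := by
  simp only [northEast, filter_eq_empty_iff, mem_univ, true_implies, not_and, not_lt]
  exact forall₂_congr fun j hij => (le_iff_lt_or_eq).trans <| or_iff_left fun h => hij.ne' (hπ h)

lemma strictMonoOn_insert_of_subset_northEast {i : α} {D : Finset α}
    (hmono : StrictMonoOn π (northEast π i)) (hD : D ⊆ northEast π i) :
    StrictMonoOn π ↑(insert i D) := by
  have hDi : ∀ j ∈ D, i < j ∧ π i < π j := fun j hj => mem_northEast.mp (hD hj)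
  intro a ha b hb hab
  simp only [coe_insert, Set.mem_insert_iff, mem_coe] at ha hb
  rcases ha with rfl | ha <;> rcases hb with rfl | hb
  · exact absurd hab (lt_irrefl _)
  · exact (hDi b hb).2
  · exact absurd hab (hDi a ha).1.not_gt
  · exact hmono (hD ha) (hD hb) hab

lemma filter_strictMonoOn_eq_biUnion [DecidablePred fun s : Finset α => StrictMonoOn π ↑s]
    (hmono : ∀ i, StrictMonoOn π (northEast π i)) :
    ({s | s.Nonempty ∧ StrictMonoOn π ↑s} : Finset (Finset α)) =
      univ.biUnion fun i => (northEast π i).powerset.image (insert i) := by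
  ext s
  simp only [mem_filter, mem_univ, true_and, mem_biUnion, mem_image, mem_powerset]
  constructor
  · rintro ⟨hs, hsmono⟩
    refine ⟨s.min' hs, s.erase (s.min' hs), fun j hj => ?_, insert_erase (s.min'_mem hs)⟩
    obtain ⟨hne, hj⟩ := mem_erase.mp hj
    have hlt : s.min' hs < j := lt_of_le_of_ne (s.min'_le j hj) hne.symm
    exact mem_northEast.mpr ⟨hlt, hsmono (s.min'_mem hs) hj hlt⟩
  · rintro ⟨i, D, hD, rfl⟩
    exact ⟨insert_nonempty i D, strictMonoOn_insert_of_subset_northEast (hmono i) hD⟩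

lemma pairwiseDisjoint_image_insert_northEast :
    (↑(univ : Finset α) : Set α).PairwiseDisjoint
      fun i => (northEast π i).powerset.image (insert i) := by
  intro i _ j _ hij
  simp only [Function.onFun, disjoint_left, mem_image, mem_powerset, not_exists, not_and]
  rintro s ⟨D, hD, rfl⟩ E hE hDE
  have hjD : j ∈ D := (mem_insert.mp (hDE ▸ mem_insert_self j E)).resolve_left hij.symm
  have hiE : i ∈ E := (mem_insert.mp (hDE.symm ▸ mem_insert_self i D)).resolve_left hij
  have hij' : i < j := (mem_northEast.mp (hD hjD)).1
  have hji : j < i := (mem_northEast.mp (hE hiE)).1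
  exact lt_asymm hij' hji

lemma sum_image_insert_northEast (i : α) :
    ∑ s ∈ (northEast π i).powerset.image (insert i), (-1 : ℤ) ^ (#s + 1) =
      if northEast π i = ∅ then 1 else 0 := by
  have hi : i ∉ northEast π i := by simp
  rw [sum_image fun D hD E hE h => by
    rw [← erase_insert (notMem_mono (mem_powerset.mp hD) hi),
      ← erase_insert (notMem_mono (mem_powerset.mp hE) hi), h]]
  rw [← sum_powerset_neg_one_pow_card]
  refine sum_congr rfl fun D hD => ?_
  rw [card_insert_of_notMem (notMem_mono (mem_powerset.mp hD) hi), pow_add, pow_add]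
  norm_num

lemma sum_neg_one_pow_strictMonoOn [DecidablePred fun s : Finset α => StrictMonoOn π ↑s]
    (hmono : ∀ i, StrictMonoOn π (northEast π i)) :
    ∑ s ∈ ({s | s.Nonempty ∧ StrictMonoOn π ↑s} : Finset (Finset α)), (-1 : ℤ) ^ (#s + 1) =
      #{i | northEast π i = ∅} := by
  rw [filter_strictMonoOn_eq_biUnion hmono, sum_biUnion pairwiseDisjoint_image_insert_northEast]
  simp only [sum_image_insert_northEast, sum_boole]

end

section

variable {α β : Type*} [LinearOrder α] [Fintype α] [Preorder β] (π : α → β)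

def strictMonoSubseqEquiv (d : ℕ) :
    {f : Fin d → α // StrictMono f ∧ StrictMono (π ∘ f)} ≃
      {s : Finset α // #s = d ∧ StrictMonoOn π ↑s} where
  toFun f := ⟨univ.image f.1, by
      rw [card_image_of_injective _ f.2.1.injective, card_univ, Fintype.card_fin], by
      rintro _ ha _ hb hab
      obtain ⟨i, -, rfl⟩ := mem_image.mp ha
      obtain ⟨j, -, rfl⟩ := mem_image.mp hb
      exact f.2.2 (f.2.1.lt_iff_lt.mp hab)⟩
  invFun s := ⟨s.1.orderEmbOfFin s.2.1, (s.1.orderEmbOfFin s.2.1).strictMono,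
    fun _ _ hij => s.2.2 (orderEmbOfFin_mem _ _ _) (orderEmbOfFin_mem _ _ _)
      ((s.1.orderEmbOfFin s.2.1).strictMono hij)⟩
  left_inv f := Subtype.ext <|
    (orderEmbOfFin_unique _ (fun x => mem_image_of_mem f.1 (mem_univ x)) f.2.1).symm
  right_inv s := Subtype.ext <| coe_injective <| by
    rw [coe_image, coe_univ, Set.image_univ, range_orderEmbOfFin]

lemma card_strictMono_comp [DecidablePred fun s : Finset α => StrictMonoOn π ↑s] (d : ℕ) :
    Nat.card {f : Fin d → α // StrictMono f ∧ StrictMono (π ∘ f)} =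
      #{s : Finset α | #s = d ∧ StrictMonoOn π ↑s} := by
  rw [Nat.card_congr (strictMonoSubseqEquiv π d), Nat.card_eq_fintype_card, Fintype.card_subtype]

end

lemma sum_Icc_neg_one_pow_mul_card {α : Type*} [Fintype α] (P : Finset α → Prop)
    [DecidablePred P] :
    ∑ d ∈ Icc 1 (Fintype.card α), (-1 : ℤ) ^ (d + 1) * #{s | #s = d ∧ P s} =
      ∑ s ∈ ({s | s.Nonempty ∧ P s} : Finset (Finset α)), (-1 : ℤ) ^ (#s + 1) := by
  rw [← sum_fiberwise_of_maps_to (g := card) (t := Icc 1 (Fintype.card α)) fun s hs =>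
    mem_Icc.mpr ⟨card_pos.mpr (mem_filter.mp hs).2.1, card_le_univ s⟩]
  refine sum_congr rfl fun d hd => ?_
  rw [sum_congr rfl fun s hs => by rw [(mem_filter.mp hs).2], sum_const, nsmul_eq_mul, mul_comm,
    filter_filter]
  congr 3
  ext s
  simp only [mem_filter, mem_univ, true_and]
  constructor
  · rintro ⟨rfl, hP⟩; exact ⟨⟨card_pos.mp (mem_Icc.mp hd).1, hP⟩, rfl⟩
  · rintro ⟨⟨-, hP⟩, rfl⟩; exact ⟨rfl, hP⟩

lemma contains_132_of_lt {n : ℕ} {π : Fin n → Fin n} {a b c : Fin n} (hab : a < b) (hbc : b < c)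
    (hac : π a < π c) (hcb : π c < π b) : Contains π ![1, 3, 2] := by
  refine ⟨![a, b, c], by simp [strictMono_vecCons, hab, hbc, Subsingleton.strictMono],
    fun i j => ?_⟩
  have hab' : π a < π b := hac.trans hcb
  fin_cases i <;> fin_cases j <;> simp [hac, hcb, hab', hac.not_gt, hcb.not_gt, hab'.not_gt]

lemma strictMonoOn_northEast {n : ℕ} {π : Fin n → Fin n} (hπ : Function.Injective π)
    (havoid : Avoids π ![1, 3, 2]) (i : Fin n) : StrictMonoOn π ↑(northEast π i) := by
  intro j hj k hk hjk
  rw [mem_coe, mem_northEast] at hj hk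
  refine lt_of_le_of_ne (not_lt.mp fun hkj => havoid ?_) (hπ.ne hjk.ne)
  exact contains_132_of_lt hj.1 hjk hk.2 hkj

theorem stmt_15 (n : ℕ) (π : Fin n → Fin n) (hbij : Function.Bijective π)
    (havoid : Avoids π ![1,3,2]) :
    (Nat.card {i : Fin n // ∀ j, i < j → π j < π i} : ℤ) =
      ∑ d ∈ Finset.Icc 1 n, (-1)^(d+1) *
        (Nat.card {f : Fin d → Fin n // StrictMono f ∧ StrictMono (π ∘ f)} : ℤ) := by
  have hrl : Nat.card {i : Fin n // ∀ j, i < j → π j < π i} = #{i | northEast π i = ∅} := by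
    rw [Nat.card_eq_fintype_card, Fintype.card_subtype]
    simp only [northEast_eq_empty_iff hbij.injective]
  simp only [card_strictMono_comp]
  rw [hrl, ← sum_neg_one_pow_strictMonoOn (strictMonoOn_northEast hbij.injective havoid)]
  simpa using (sum_Icc_neg_one_pow_mul_card (fun s : Finset (Fin n) => StrictMonoOn π ↑s)).symm
end

section
/- For all n ≥ 2, the number of permutations of {1,...,n} avoiding 132, 2341, and 3241 that have exactly one right-to-left maximum equals the Pell number p_{n-1}. -/
/-!
For `n ≥ 3`, the largest entry of `σ ∈ TSS132 n` is either last, or first, or second with the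
second largest entry in front of it: since `σ` avoids 132, every entry before the maximum exceeds
every entry after it, so a maximum at any other position, together with the first two and the
last position, forms a 2341 or a 3241. These three shapes are `sumOne π = π ⊕ 1`,
`oneSkewSum π = 1 ⊖ π` and `oneTwoSkewSum π = 12 ⊖ π`, and each construction preserves and
reflects the avoidance of 132, 2341 and 3241. Hence
`|TSS132 n| = 2 |TSS132 (n-1)| + |TSS132 (n-2)|`, so `|TSS132 n| = pell n` for `n ≥ 1`.
A permutation has a single right-to-left maximum iff it ends with its maximum, i.e. it is `π ⊕ 1`
with `π ∈ TSS132 (n-1)`, which gives `pell (n-1)`.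
-/

open Function Fin

theorem Fin.one_lt_of_ne_zero_of_ne_one {m : ℕ} {i : Fin (m + 2)} (h0 : i ≠ 0) (h1 : i ≠ 1) :
    1 < i := by
  rw [Fin.lt_def, Fin.val_one]
  have := Fin.val_ne_of_ne h0
  have := Fin.val_ne_of_ne h1
  simp only [val_zero, val_one] at *
  omega

section Patterns

variable {n : ℕ} {π : Fin n → Fin n}

theorem contains_132 {a b c : Fin n} (hab : a < b) (hbc : b < c)
    (h1 : π a < π c) (h2 : π c < π b) : Contains π ![1, 3, 2] := by
  refine ⟨![a, b, c], strictMono_iff_lt_succ.2 ?_, ?_⟩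
  · intro i; fin_cases i <;> simpa
  · intro i j
    fin_cases i <;> fin_cases j <;> simp <;> order

theorem contains_2341 {a b c d : Fin n} (hab : a < b) (hbc : b < c) (hcd : c < d)
    (h1 : π d < π a) (h2 : π a < π b) (h3 : π b < π c) : Contains π ![2, 3, 4, 1] := by
  refine ⟨![a, b, c, d], strictMono_iff_lt_succ.2 ?_, ?_⟩
  · intro i; fin_cases i <;> simpa
  · intro i j
    fin_cases i <;> fin_cases j <;> simp <;> order

theorem contains_3241 {a b c d : Fin n} (hab : a < b) (hbc : b < c) (hcd : c < d)
    (h1 : π d < π b) (h2 : π b < π a) (h3 : π a < π c) : Contains π ![3, 2, 4, 1] := by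
  refine ⟨![a, b, c, d], strictMono_iff_lt_succ.2 ?_, ?_⟩
  · intro i; fin_cases i <;> simpa
  · intro i j
    fin_cases i <;> fin_cases j <;> simp <;> order

theorem Avoids.le_of_lt_of_lt (h : Avoids π ![1, 3, 2]) {i k j : Fin n} (hik : i < k)
    (hkj : k < j) (hj : π j < π k) : π j ≤ π i :=
  le_of_not_gt fun hij => h (contains_132 hik hkj hij hj)

theorem avoids_of_lt {k : ℕ} (p : Fin k → ℕ) (h : n < k) : Avoids π p := fun ⟨f, hf, _⟩ =>
  (Fintype.card_le_of_injective f hf.injective).not_gt (by simpa using h)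

theorem avoids_iff_of_strictMono {m k : ℕ} {σ : Fin m → Fin m} {e : Fin n → Fin m}
    (he : StrictMono e) (hv : ∀ i j, π i < π j ↔ σ (e i) < σ (e j)) {p : Fin k → ℕ}
    (hrange : ∀ f : Fin k → Fin m, StrictMono f → (∀ i j, p i < p j ↔ σ (f i) < σ (f j)) →
      ∀ i, f i ∈ Set.range e) :
    Avoids σ p ↔ Avoids π p := by
  refine not_congr ⟨fun ⟨f, hf, hocc⟩ => ?_, fun ⟨f, hf, hocc⟩ => ?_⟩
  · choose g hg using hrange f hf hocc
    refine ⟨g, fun i j hij => he.lt_iff_lt.1 ?_, fun i j => ?_⟩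
    · simpa only [hg] using hf hij
    · rw [hocc, hv, hg, hg]
  · exact ⟨e ∘ f, he.comp hf, fun i j => (hocc i j).trans (hv _ _)⟩

end Patterns

section Extensions

variable {n k : ℕ} {π : Fin n → Fin n}

def sumOne (π : Fin n → Fin n) : Fin (n + 1) → Fin (n + 1) :=
  snoc (castSucc ∘ π) (last n)

def oneSkewSum (π : Fin n → Fin n) : Fin (n + 1) → Fin (n + 1) :=
  cons (last n) (castSucc ∘ π)

def oneTwoSkewSum (π : Fin n → Fin n) : Fin (n + 2) → Fin (n + 2) :=
  cons (last n).castSucc (cons (last (n + 1)) (castSucc ∘ castSucc ∘ π))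

@[simp] theorem sumOne_castSucc (i : Fin n) : sumOne π i.castSucc = (π i).castSucc := by
  simp [sumOne]

@[simp] theorem sumOne_last : sumOne π (last n) = last n := by simp [sumOne]

@[simp] theorem oneSkewSum_zero : oneSkewSum π 0 = last n := rfl

@[simp] theorem oneSkewSum_succ (i : Fin n) : oneSkewSum π i.succ = (π i).castSucc := rfl

@[simp] theorem oneTwoSkewSum_zero : oneTwoSkewSum π 0 = (last n).castSucc := rfl

@[simp] theorem oneTwoSkewSum_one : oneTwoSkewSum π 1 = last (n + 1) := rfl

@[simp] theorem oneTwoSkewSum_succ_succ (i : Fin n) :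
    oneTwoSkewSum π i.succ.succ = (π i).castSucc.castSucc := rfl

theorem le_val_oneTwoSkewSum {i : Fin (n + 2)} (hi : i.val < 2) :
    n ≤ (oneTwoSkewSum π i).val := by
  obtain rfl | rfl : i = 0 ∨ i = 1 := by simp only [Fin.ext_iff, val_zero, val_one]; omega
  all_goals simp

theorem mem_range_succ_succ {i : Fin (n + 2)} (hi : 2 ≤ i.val) :
    i ∈ Set.range (fun j : Fin n => j.succ.succ) :=
  ⟨⟨i - 2, by omega⟩, Fin.ext (by simp; omega)⟩

theorem injective_sumOne_iff : Injective (sumOne π) ↔ Injective π := by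
  rw [sumOne, snoc_injective_iff, (castSucc_injective n).of_comp_iff]
  simp [Set.mem_range, (castSucc_lt_last _).ne]

theorem injective_oneSkewSum_iff : Injective (oneSkewSum π) ↔ Injective π := by
  rw [oneSkewSum, cons_injective_iff, (castSucc_injective n).of_comp_iff]
  simp [Set.mem_range]

theorem injective_oneTwoSkewSum_iff : Injective (oneTwoSkewSum π) ↔ Injective π := by
  rw [oneTwoSkewSum, cons_injective_iff, cons_injective_iff, (castSucc_injective _).of_comp_iff,
    (castSucc_injective n).of_comp_iff]
  simp only [Set.mem_range, comp_apply, forall_fin_succ, cons_zero, cons_succ, Fin.ext_iff,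
    val_castSucc, val_last, not_exists]
  exact ⟨fun h => h.2.2, fun h => ⟨⟨by omega, fun i => by omega⟩, fun i => by omega, h⟩⟩

@[simp] theorem sumOne_injective : Injective (sumOne (n := n)) := fun π₁ π₂ h =>
  funext fun i => castSucc_injective _ (by simpa using congrFun h i.castSucc)

@[simp] theorem oneSkewSum_injective : Injective (oneSkewSum (n := n)) := fun π₁ π₂ h =>
  funext fun i => castSucc_injective _ (by simpa using congrFun h i.succ)

@[simp] theorem oneTwoSkewSum_injective : Injective (oneTwoSkewSum (n := n)) := fun π₁ π₂ h =>
  funext fun i => castSucc_injective _ <| castSucc_injective _ <| by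
    simpa using congrFun h i.succ.succ

theorem avoids_sumOne_iff {p : Fin (k + 1) → ℕ} (hp : ∃ i, p (last k) < p i) :
    Avoids (sumOne π) p ↔ Avoids π p := by
  refine avoids_iff_of_strictMono strictMono_castSucc (by simp) fun f hf hocc i => ?_
  obtain ⟨i₀, hi₀⟩ := hp
  have hlast : f (last k) ≠ last n := fun h =>
    (le_last _).not_gt (by simpa [h] using (hocc _ i₀).1 hi₀)
  have hi : f i ≠ last n := ((hf.monotone (le_last i)).trans_lt (lt_last_iff_ne_last.2 hlast)).ne
  exact ⟨(f i).castPred hi, castSucc_castPred _ _⟩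

theorem avoids_oneSkewSum_iff {p : Fin (k + 1) → ℕ} (hp : ∃ i, p 0 < p i) :
    Avoids (oneSkewSum π) p ↔ Avoids π p := by
  refine avoids_iff_of_strictMono strictMono_succ (by simp) fun f hf hocc i => ?_
  obtain ⟨i₀, hi₀⟩ := hp
  have hzero : f 0 ≠ 0 := fun h =>
    (le_last _).not_gt (by simpa [h] using (hocc _ i₀).1 hi₀)
  have hi : f i ≠ 0 := (Fin.pos_iff_ne_zero.2 hzero |>.trans_le (hf.monotone (zero_le i))).ne'
  exact ⟨(f i).pred hi, succ_pred _ _⟩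

theorem avoids_oneTwoSkewSum_iff {p : Fin (k + 3) → ℕ} (hp : p 0 < p 2) :
    Avoids (oneTwoSkewSum π) p ↔ Avoids π p := by
  refine avoids_iff_of_strictMono (strictMono_succ.comp strictMono_succ) (by simp)
    fun f hf hocc i => mem_range_succ_succ ?_
  have h01 : (f 0).val < (f 1).val := hf (by simp)
  have h12 : (f 1).val < (f 2).val := hf (by simp [Fin.lt_def, Nat.mod_eq_of_lt])
  suffices h0 : 2 ≤ (f 0).val from h0.trans (hf.monotone (Fin.zero_le i))
  -- otherwise `f 0` carries one of the two largest values, which exceeds the value at `f 2`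
  by_contra! h0
  obtain ⟨j, hj⟩ := mem_range_succ_succ (n := n) (i := f 2) (by omega)
  have h02 := (hocc 0 2).1 hp
  rw [← hj, oneTwoSkewSum_succ_succ, Fin.lt_def, val_castSucc, val_castSucc] at h02
  have := le_val_oneTwoSkewSum (π := π) h0
  omega

end Extensions

section TSS132

variable {n : ℕ} {π : Fin n → Fin n}

theorem mem_TSS132_iff : π ∈ TSS132 n ↔
    Injective π ∧ Avoids π ![1, 3, 2] ∧ Avoids π ![2, 3, 4, 1] ∧ Avoids π ![3, 2, 4, 1] :=
  Finite.injective_iff_bijective.symm.and Iff.rfl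

theorem sumOne_mem_TSS132_iff : sumOne π ∈ TSS132 (n + 1) ↔ π ∈ TSS132 n := by
  simp only [mem_TSS132_iff, injective_sumOne_iff,
    avoids_sumOne_iff (p := ![1, 3, 2]) ⟨1, by decide⟩,
    avoids_sumOne_iff (p := ![2, 3, 4, 1]) ⟨0, by decide⟩,
    avoids_sumOne_iff (p := ![3, 2, 4, 1]) ⟨0, by decide⟩]

theorem oneSkewSum_mem_TSS132_iff : oneSkewSum π ∈ TSS132 (n + 1) ↔ π ∈ TSS132 n := by
  simp only [mem_TSS132_iff, injective_oneSkewSum_iff,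
    avoids_oneSkewSum_iff (p := ![1, 3, 2]) ⟨1, by decide⟩,
    avoids_oneSkewSum_iff (p := ![2, 3, 4, 1]) ⟨2, by decide⟩,
    avoids_oneSkewSum_iff (p := ![3, 2, 4, 1]) ⟨2, by decide⟩]

theorem oneTwoSkewSum_mem_TSS132_iff : oneTwoSkewSum π ∈ TSS132 (n + 2) ↔ π ∈ TSS132 n := by
  simp only [mem_TSS132_iff, injective_oneTwoSkewSum_iff,
    avoids_oneTwoSkewSum_iff (p := ![1, 3, 2]) (by decide),
    avoids_oneTwoSkewSum_iff (p := ![2, 3, 4, 1]) (by decide),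
    avoids_oneTwoSkewSum_iff (p := ![3, 2, 4, 1]) (by decide)]

theorem image_sumOne_TSS132 :
    sumOne '' TSS132 n = {σ ∈ TSS132 (n + 1) | σ (last n) = last n} := by
  ext σ
  refine ⟨?_, fun ⟨hσ, hlast⟩ => ?_⟩
  · rintro ⟨π, hπ, rfl⟩
    exact ⟨sumOne_mem_TSS132_iff.2 hπ, sumOne_last⟩
  have hne (i : Fin n) : σ i.castSucc ≠ last n := fun h =>
    (castSucc_lt_last i).ne ((mem_TSS132_iff.1 hσ).1 (h.trans hlast.symm))
  have hext : sumOne (fun i => (σ i.castSucc).castPred (hne i)) = σ := by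
    funext j
    induction j using lastCases <;> simp [hlast]
  exact ⟨_, sumOne_mem_TSS132_iff.1 (by rwa [hext]), hext⟩

theorem image_oneSkewSum_TSS132 :
    oneSkewSum '' TSS132 n = {σ ∈ TSS132 (n + 1) | σ 0 = last n} := by
  ext σ
  refine ⟨?_, fun ⟨hσ, hzero⟩ => ?_⟩
  · rintro ⟨π, hπ, rfl⟩
    exact ⟨oneSkewSum_mem_TSS132_iff.2 hπ, oneSkewSum_zero⟩
  have hne (i : Fin n) : σ i.succ ≠ last n := fun h =>
    (succ_ne_zero i) ((mem_TSS132_iff.1 hσ).1 (h.trans hzero.symm))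
  have hext : oneSkewSum (fun i => (σ i.succ).castPred (hne i)) = σ := by
    funext j
    induction j using Fin.cases <;> simp [hzero]
  exact ⟨_, oneSkewSum_mem_TSS132_iff.1 (by rwa [hext]), hext⟩

theorem image_oneTwoSkewSum_TSS132 :
    oneTwoSkewSum '' TSS132 n =
      {σ ∈ TSS132 (n + 2) | σ 0 = (last n).castSucc ∧ σ 1 = last (n + 1)} := by
  ext σ
  refine ⟨?_, fun ⟨hσ, hzero, hone⟩ => ?_⟩
  · rintro ⟨π, hπ, rfl⟩
    exact ⟨oneTwoSkewSum_mem_TSS132_iff.2 hπ, oneTwoSkewSum_zero, oneTwoSkewSum_one⟩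
  have hinj := (mem_TSS132_iff.1 hσ).1
  have hlt (i : Fin n) : (σ i.succ.succ).val < n := by
    have h₀ : σ i.succ.succ ≠ σ 0 := hinj.ne (succ_ne_zero _)
    have h₁ : σ i.succ.succ ≠ σ 1 := hinj.ne (by simp [Fin.ext_iff])
    rw [hzero, Ne, Fin.ext_iff, val_castSucc, val_last] at h₀
    rw [hone, Ne, Fin.ext_iff, val_last] at h₁
    omega
  have hext : oneTwoSkewSum (fun i => ⟨σ i.succ.succ, hlt i⟩) = σ := by
    funext j
    induction j using Fin.cases with
    | zero => simp [hzero]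
    | succ j => induction j using Fin.cases <;> simp [hone]
  exact ⟨_, oneTwoSkewSum_mem_TSS132_iff.1 (by rwa [hext]), hext⟩

theorem mem_TSS132_cases {m : ℕ} {σ : Fin (m + 2) → Fin (m + 2)} (hσ : σ ∈ TSS132 (m + 2)) :
    σ (last (m + 1)) = last (m + 1) ∨ σ 0 = last (m + 1) ∨
      (σ 0 = (last m).castSucc ∧ σ 1 = last (m + 1)) := by
  obtain ⟨hinj, h132, h2341, h3241⟩ := mem_TSS132_iff.1 hσ
  obtain ⟨k, hk⟩ := (Finite.injective_iff_surjective.1 hinj) (last (m + 1))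
  have hbelow {j : Fin (m + 2)} (hj : j ≠ k) : σ j < σ k :=
    hk ▸ lt_last_iff_ne_last.2 fun h => hj (hinj (h.trans hk.symm))
  have hsep {i j : Fin (m + 2)} (hik : i < k) (hkj : k < j) : σ j < σ i :=
    (h132.le_of_lt_of_lt hik hkj (hbelow hkj.ne')).lt_of_ne (hinj.ne (hik.trans hkj).ne')
  by_cases hklast : k = last (m + 1)
  · exact .inl (hklast ▸ hk)
  by_cases hk0 : k = 0
  · exact .inr (.inl (hk0 ▸ hk))
  have hk_last : k < last (m + 1) := lt_last_iff_ne_last.2 hklast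
  have h0k : 0 < k := Fin.pos_iff_ne_zero.2 hk0
  refine .inr (.inr ?_)
  by_cases hk1 : k = 1
  · subst hk1
    refine ⟨?_, hk⟩
    obtain ⟨j, hj⟩ := (Finite.injective_iff_surjective.1 hinj) (last m).castSucc
    rcases eq_or_ne j 0 with rfl | hj0
    · exact hj
    have hj1 : j ≠ 1 := by
      rintro rfl
      simp [hk, Fin.ext_iff] at hj
    have hj_lt := hsep h0k (Fin.one_lt_of_ne_zero_of_ne_one hj0 hj1)
    have hlt_one := hbelow h0k.ne
    rw [hj] at hj_lt
    rw [hk] at hlt_one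
    simp only [Fin.lt_def, val_castSucc, val_last] at hj_lt hlt_one
    omega
  · have h1k : 1 < k := Fin.one_lt_of_ne_zero_of_ne_one hk0 hk1
    exfalso
    rcases lt_or_gt_of_ne (hinj.ne (zero_ne_one' (Fin (m + 2)))) with h01 | h10
    · exact h2341 (contains_2341 Fin.zero_lt_one h1k hk_last (hsep h0k hk_last) h01 (hbelow h1k.ne))
    · exact h3241 (contains_3241 Fin.zero_lt_one h1k hk_last (hsep h1k hk_last) h10 (hbelow h0k.ne))

theorem card_TSS132_add_three (m : ℕ) :
    Nat.card (TSS132 (m + 3)) = 2 * Nat.card (TSS132 (m + 2)) + Nat.card (TSS132 (m + 1)) := by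
  have hcover : TSS132 (m + 3) = (sumOne '' TSS132 (m + 2) ∪ oneSkewSum '' TSS132 (m + 2)) ∪
      oneTwoSkewSum '' TSS132 (m + 1) := by
    rw [image_sumOne_TSS132, image_oneSkewSum_TSS132, image_oneTwoSkewSum_TSS132]
    ext σ
    simp only [Set.mem_union, Set.mem_sep_iff]
    exact ⟨fun hσ => by rcases mem_TSS132_cases hσ with h | h | h <;> simp [hσ, h],
      fun h => by rcases h with (h | h) | h <;> exact h.1⟩
  have hAB : Disjoint (sumOne '' TSS132 (m + 2)) (oneSkewSum '' TSS132 (m + 2)) := by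
    rw [image_sumOne_TSS132, image_oneSkewSum_TSS132, Set.disjoint_left]
    rintro σ ⟨hσ, hlast⟩ ⟨-, hzero⟩
    simpa [Fin.ext_iff] using (mem_TSS132_iff.1 hσ).1 (hlast.trans hzero.symm)
  have hABC : Disjoint (sumOne '' TSS132 (m + 2) ∪ oneSkewSum '' TSS132 (m + 2))
      (oneTwoSkewSum '' TSS132 (m + 1)) := by
    rw [image_sumOne_TSS132, image_oneSkewSum_TSS132, image_oneTwoSkewSum_TSS132,
      Set.disjoint_left]
    rintro σ (⟨hσ, hlast⟩ | ⟨-, hzero⟩) ⟨-, hzero', hone⟩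
    · simpa [Fin.ext_iff] using (mem_TSS132_iff.1 hσ).1 (hlast.trans hone.symm)
    · simp [hzero, Fin.ext_iff] at hzero'
  rw [Nat.card_coe_set_eq, hcover, Set.ncard_union_eq hABC, Set.ncard_union_eq hAB,
    Set.ncard_image_of_injective _ sumOne_injective,
    Set.ncard_image_of_injective _ oneSkewSum_injective,
    Set.ncard_image_of_injective _ oneTwoSkewSum_injective, Nat.card_coe_set_eq,
    Nat.card_coe_set_eq]
  ring

theorem TSS132_eq_of_lt_three (hn : n < 3) : TSS132 n = {π | Bijective π} := by
  ext π
  exact and_iff_left ⟨avoids_of_lt _ (by omega), avoids_of_lt _ (by omega),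
    avoids_of_lt _ (by omega)⟩

theorem card_setOf_bijective (n : ℕ) :
    Nat.card {π : Fin n → Fin n | Bijective π} = n.factorial := by
  rw [Set.coe_ofPred, Nat.card_congr Equiv.bijectiveEquiv, Nat.card_perm, Nat.card_fin]

theorem card_TSS132_eq_pell (m : ℕ) : Nat.card (TSS132 (m + 1)) = pell (m + 1) := by
  induction m using Nat.twoStepInduction with
  | zero => rw [TSS132_eq_of_lt_three (by norm_num), card_setOf_bijective]; rfl
  | one => rw [TSS132_eq_of_lt_three (by norm_num), card_setOf_bijective]; rfl
  | more m ih₁ ih₂ => rw [card_TSS132_add_three, ih₁, ih₂]; rfl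

end TSS132

theorem card_rightToLeftMax_eq_one_iff {n : ℕ} {π : Fin (n + 1) → Fin (n + 1)}
    (hπ : Bijective π) :
    Nat.card {i : Fin (n + 1) // ∀ j, i < j → π j < π i} = 1 ↔ π (last n) = last n := by
  rw [Nat.card_eq_one_iff_exists]
  constructor
  · rintro ⟨⟨i, hi⟩, huniq⟩
    obtain ⟨k, hk⟩ := hπ.2 (last n)
    have hk_max : ∀ j, k < j → π j < π k := fun j hkj =>
      hk ▸ lt_last_iff_ne_last.2 fun h => hkj.ne' (hπ.1 (h.trans hk.symm))
    have hlast_max : ∀ j, last n < j → π j < π (last n) := fun j h => absurd h (le_last j).not_gt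
    have hk_last : k = last n :=
      congrArg Subtype.val ((huniq ⟨k, hk_max⟩).trans (huniq ⟨last n, hlast_max⟩).symm)
    exact hk_last ▸ hk
  · intro hlast
    refine ⟨⟨last n, fun j h => absurd h (le_last j).not_gt⟩, fun ⟨i, hi⟩ => Subtype.ext ?_⟩
    by_contra hne
    exact (le_last _).not_gt (hlast ▸ hi _ (lt_last_iff_ne_last.2 hne))

theorem stmt_16 (n : ℕ) (hn : 2 ≤ n) :
    Nat.card ↥{π ∈ TSS132 n | Nat.card {i : Fin n // ∀ j, i < j → π j < π i} = 1} =
      pell (n-1) := by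
  obtain ⟨m, rfl⟩ : ∃ m, n = m + 2 := ⟨n - 2, by omega⟩
  have hset : {π ∈ TSS132 (m + 2) | Nat.card {i : Fin (m + 2) // ∀ j, i < j → π j < π i} = 1} =
      sumOne '' TSS132 (m + 1) := by
    rw [image_sumOne_TSS132]
    ext π
    exact and_congr_right fun hπ => card_rightToLeftMax_eq_one_iff hπ.1
  rw [hset, Nat.card_coe_set_eq, Set.ncard_image_of_injective _ sumOne_injective,
    ← Nat.card_coe_set_eq, card_TSS132_eq_pell]
  rfl
end
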